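/- arXiv:2507.09600 — 6 statements merged into one kernel-verified Lean document; each statement's English description precedes it below -/
import Mathlib

section
/- Let (v̄_1,…,v̄_n) be any valuation profile and (v̂_1,…,v̂_n) a strict valuation profile such that for each i ∈ N and all distinct X, Y ⊆ E, v̄_i(X) > v̄_i(Y) implies v̂_i(X) > v̂_i(Y). If an allocation (X_1,…,X_n) is EFX at (v̂_1,…,v̂_n), then it is also EFX at (v̄_1,…,v̄_n). -/
open Finset

/-- A valuation `v` on subsets of `E` is set monotonic if larger sets (by inclusion)
have larger value. -/
def SetMonotonic {α : Type*} (E : Finset α) (v : Finset α → ℝ) : Prop :=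
  ∀ X Y : Finset α, X ⊆ Y → Y ⊆ E → v X ≤ v Y

/-- `⟨k,l⟩`-set monotonicity: monotone along inclusions whose cardinalities lie in `[k,l]`. -/
def SetMonotonicKL {α : Type*} (E : Finset α) (k l : ℕ) (v : Finset α → ℝ) : Prop :=
  ∀ X Y : Finset α, X ⊆ Y → Y ⊆ E → k ≤ X.card → X.card < Y.card → Y.card ≤ l → v X ≤ v Y

/-- `⟨k,l⟩`-size monotonicity: any set of strictly larger cardinality (within `[k,l]`)
has larger value. -/
def SizeMonotonic {α : Type*} (E : Finset α) (k l : ℕ) (v : Finset α → ℝ) : Prop :=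
  ∀ X Y : Finset α, X ⊆ E → Y ⊆ E → X ≠ Y →
    k ≤ X.card → X.card < Y.card → Y.card ≤ l → v X ≤ v Y

/-- An allocation of the goods `E` among `n` agents: pairwise disjoint bundles
whose union is `E`. -/
def IsAllocation {α : Type*} [DecidableEq α] (E : Finset α) {n : ℕ}
    (X : Fin n → Finset α) : Prop :=
  (∀ i, X i ⊆ E) ∧ (∀ i j : Fin n, i ≠ j → Disjoint (X i) (X j)) ∧
    Finset.univ.biUnion X = E

/-- `X E_v Y` : `X` is envy-free from `Y` up to any one item at valuation `v`. -/
def EFXpref {α : Type*} [DecidableEq α] (v : Finset α → ℝ) (X Y : Finset α) : Prop :=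
  ∀ y ∈ Y, v (Y.erase y) ≤ v X

/-- An allocation is EFX at a profile `v` if every agent is envy-free up to any one good
from every other agent's bundle. -/
def IsEFX {α : Type*} [DecidableEq α] {n : ℕ} (v : Fin n → Finset α → ℝ)
    (X : Fin n → Finset α) : Prop :=
  ∀ i j : Fin n, EFXpref (v i) (X i) (X j)

/-- A valuation is strict if distinct bundles (within `E`) have distinct values. -/
def StrictVal {α : Type*} (E : Finset α) (v : Finset α → ℝ) : Prop :=
  ∀ X Y : Finset α, X ⊆ E → Y ⊆ E → X ≠ Y → v X ≠ v Y

/-- If a strict profile `vhat` refines a (weak) profile `vbar` in the sense that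
strict preferences at `vbar` are preserved at `vhat`, then every allocation that is EFX at
`vhat` is also EFX at `vbar`. -/
theorem efx_of_strict_refinement {α : Type*} [DecidableEq α] (n m : ℕ) (hn : 2 ≤ n)
    (E : Finset α) (hE : E.card = m)
    (vbar vhat : Fin n → Finset α → ℝ)
    (hstrict : ∀ i, StrictVal E (vhat i))
    (hrefine : ∀ i : Fin n, ∀ X Y : Finset α, X ⊆ E → Y ⊆ E → X ≠ Y →
      vbar i Y < vbar i X → vhat i Y < vhat i X)
    (X : Fin n → Finset α) (hX : IsAllocation E X) (hEFX : IsEFX vhat X) :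
    IsEFX vbar X := by
  intro i j y hy
  by_contra h
  push_neg at h
  have hXiE : X i ⊆ E := hX.1 i
  have herE : (X j).erase y ⊆ E := (Finset.erase_subset y (X j)).trans (hX.1 j)
  have hne : (X j).erase y ≠ X i := by
    intro heq; rw [heq] at h; exact lt_irrefl _ h
  have := hrefine i ((X j).erase y) (X i) herE hXiE hne h
  exact absurd (hEFX i j y hy) (not_le.mpr this)
end

section
/- Let (v_1,…,v_n) be a set monotonic valuation profile with m > n and 0 ≤ m|_n ≤ 1. If at least n−1 of the agents have ⟨⌊m/n⌋−1, ⌊m/n⌋⟩-size monotonic valuation functions, then an EFX allocation exists at (v_1,…,v_n). -/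
open Finset

/-!
Write `m = n q + r` with `r ≤ 1`. Let `i₀` be an agent such that everybody else is
size monotonic, and `j` any other agent. Run a serial dictatorship: `i₀` takes a favourite
`q`-set of all goods, then every agent other than `i₀, j` in turn takes a favourite `q`-set of
what is left, and `j` gets the remaining `q + r` goods. Removing one good from any bundle leaves
at most `q` goods, which `i₀` values below its pick by set monotonicity. For any other agent,
a bundle minus one good has `q - 1` goods, which size monotonicity places below its own bundle,
unless it is a `q`-subset of `j`'s bundle; such a set was still available when the agent chose.
-/

section

variable {α ι : Type*}

theorem SetMonotonic.le_of_card_le {E B W : Finset α} {v : Finset α → ℝ} {q : ℕ}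
    (hv : SetMonotonic E v) (hB : ∀ Z ∈ powersetCard q E, v Z ≤ v B) (hqE : q ≤ E.card)
    (hW : W ⊆ E) (hWq : W.card ≤ q) : v W ≤ v B := by
  obtain ⟨Z, hWZ, hZE, hZq⟩ := exists_subsuperset_card_eq hW hWq hqE
  exact (hv W Z hWZ hZE).trans (hB Z (mem_powersetCard.2 ⟨hZE, hZq⟩))

theorem SizeMonotonic.le_of_card_lt {E W Y : Finset α} {v : Finset α → ℝ} {k l : ℕ}
    (hs : SizeMonotonic E k l v) (hm : SetMonotonic E v) (hW : W ⊆ E) (hY : Y ⊆ E)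
    (hkW : k ≤ W.card) (hWl : W.card < l) (hlY : l ≤ Y.card) : v W ≤ v Y := by
  obtain ⟨Y', hY'Y, hY'l⟩ := exists_subset_card_eq hlY
  have hne : W ≠ Y' := by rintro rfl; omega
  exact (hs W Y' hW (hY'Y.trans hY) hne hkW (hY'l ▸ hWl) hY'l.le).trans (hm Y' Y hY'Y hY)

theorem exists_forall_ne_mem_of_card_sub_one_le [Fintype ι] [Nonempty ι] [DecidableEq ι]
    {S : Finset ι} (hS : Fintype.card ι - 1 ≤ S.card) : ∃ i₀, ∀ i ≠ i₀, i ∈ S := by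
  by_cases hSu : S = univ
  · obtain ⟨i₀⟩ := ‹Nonempty ι›
    exact ⟨i₀, fun i _ => hSu ▸ mem_univ i⟩
  obtain ⟨i₀, hi₀⟩ : ∃ i₀, i₀ ∉ S := by simpa [eq_univ_iff_forall] using hSu
  have hSeq : S = univ.erase i₀ :=
    eq_of_subset_of_card_le
      (fun x hx => mem_erase.2 ⟨ne_of_mem_of_not_mem hx hi₀, mem_univ x⟩)
      (by rwa [card_erase_of_mem (mem_univ _), card_univ])
  exact ⟨i₀, fun i hi => hSeq ▸ mem_erase.2 ⟨hi, mem_univ i⟩⟩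

variable [DecidableEq α]

def IsAllocationOn (s : Finset ι) (F : Finset α) (X : ι → Finset α) : Prop :=
  (s : Set ι).PairwiseDisjoint X ∧ s.biUnion X = F

theorem IsAllocationOn.update [DecidableEq ι] {s : Finset ι} {F B : Finset α}
    {Y : ι → Finset α} {i : ι} (hY : IsAllocationOn s (F \ B) Y) (hi : i ∉ s)
    (hB : B ⊆ F) :
    IsAllocationOn (insert i s) F (Function.update Y i B) := by
  have hagree : ∀ k ∈ s, Function.update Y i B k = Y k := fun k hk =>
    Function.update_of_ne (ne_of_mem_of_not_mem hk hi) _ _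
  refine ⟨?_, ?_⟩
  · rw [coe_insert]
    refine (hY.1.mono_on fun k hk => (hagree k hk).le).insert fun k hk _ => ?_
    rw [Function.update_self, hagree k hk]
    exact disjoint_sdiff.mono_right ((subset_biUnion_of_mem Y hk).trans hY.2.subset)
  · rw [biUnion_insert, Function.update_self, biUnion_congr rfl hagree, hY.2,
      union_sdiff_of_subset hB]

theorem IsAllocationOn.isAllocation {n : ℕ} {E : Finset α} {X : Fin n → Finset α}
    (h : IsAllocationOn univ E X) : IsAllocation E X :=
  ⟨fun i => h.2 ▸ subset_biUnion_of_mem X (mem_univ i),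
    fun _ _ hij => h.1 (by simp) (by simp) hij, h.2⟩

/-- Serial dictatorship: the agents of `T` in turn pick a favourite `q`-set of the remaining
goods, and `j` receives what is left at the end. -/
theorem exists_serial_allocation [DecidableEq ι] (v : ι → Finset α → ℝ) (q : ℕ) (j : ι)
    (T : Finset ι) (hj : j ∉ T) (F : Finset α) (hF : q * T.card ≤ F.card) :
    ∃ X : ι → Finset α, IsAllocationOn (insert j T) F X ∧
      (X j).card = F.card - q * T.card ∧ (∀ i ∈ T, (X i).card = q) ∧
      ∀ i ∈ T, ∀ Z ∈ powersetCard q (X i ∪ X j), v i Z ≤ v i (X i) := by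
  induction T using Finset.induction_on generalizing F with
  | empty => exact ⟨fun _ => F, ⟨by simp, by simp⟩, by simp, by simp, by simp⟩
  | insert a T haT ih =>
    rw [card_insert_of_notMem haT, Nat.mul_succ] at hF ⊢
    have haj : j ≠ a := fun h => hj (h ▸ mem_insert_self a T)
    obtain ⟨B, hB, hBmax⟩ :=
      exists_max_image (powersetCard q F) (v a) (powersetCard_nonempty.2 (by omega))
    rw [mem_powersetCard] at hB
    obtain ⟨Y, hY, hYj, hYcard, hYpref⟩ := ih (fun h => hj (mem_insert_of_mem h)) (F \ B)
      (by rw [card_sdiff_of_subset hB.1, hB.2]; omega)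
    have hagree : ∀ i ∈ insert j T, Function.update Y a B i = Y i := fun i hi =>
      Function.update_of_ne (ne_of_mem_of_not_mem hi (by simp [haj.symm, haT])) _ _
    refine ⟨Function.update Y a B, ?_, ?_, ?_, ?_⟩
    · rw [insert_comm]
      exact hY.update (by simp [haj.symm, haT]) hB.1
    · rw [hagree j (mem_insert_self j T), hYj, card_sdiff_of_subset hB.1, hB.2]
      omega
    · intro i hi
      rcases mem_insert.1 hi with rfl | hi
      · simpa using hB.2
      · rw [hagree i (mem_insert_of_mem hi)]
        exact hYcard i hi
    · intro i hi Z hZ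
      rw [hagree j (mem_insert_self j T)] at hZ
      rcases mem_insert.1 hi with rfl | hi
      · rw [Function.update_self] at hZ ⊢
        refine hBmax Z (powersetCard_mono (union_subset hB.1 ?_) hZ)
        exact (subset_biUnion_of_mem Y (mem_insert_self j T)).trans
          (hY.2.subset.trans sdiff_subset)
      · rw [hagree i (mem_insert_of_mem hi)] at hZ ⊢
        exact hYpref i hi Z hZ

theorem exists_serial_allocation_univ [Fintype ι] [DecidableEq ι] (v : ι → Finset α → ℝ)
    (q : ℕ) (E : Finset α) {i₀ j : ι} (hij : i₀ ≠ j)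
    (hE : q * (Fintype.card ι - 1) ≤ E.card) :
    ∃ X : ι → Finset α, IsAllocationOn univ E X ∧
      (X j).card = E.card - q * (Fintype.card ι - 1) ∧ (∀ i ≠ j, (X i).card = q) ∧
      (∀ Z ∈ powersetCard q E, v i₀ Z ≤ v i₀ (X i₀)) ∧
      ∀ i ≠ i₀, i ≠ j → ∀ Z ∈ powersetCard q (X j), v i Z ≤ v i (X i) := by
  set T := (univ.erase i₀).erase j
  have hmemT : ∀ i, i ≠ i₀ → i ≠ j → i ∈ T := fun i h₀ hj => by simp [T, h₀, hj]
  obtain ⟨c, hc⟩ : ∃ c, Fintype.card ι = c + 2 :=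
    ⟨Fintype.card ι - 2, by have := Fintype.one_lt_card_iff.2 ⟨i₀, j, hij⟩; omega⟩
  have hT : T.card = c := by
    rw [card_erase_of_mem (by simp [hij.symm]), card_erase_of_mem (mem_univ _), card_univ]
    omega
  rw [hc, show c + 2 - 1 = c + 1 by omega, Nat.mul_succ] at hE ⊢
  obtain ⟨B, hB, hBmax⟩ :=
    exists_max_image (powersetCard q E) (v i₀) (powersetCard_nonempty.2 (by omega))
  rw [mem_powersetCard] at hB
  obtain ⟨Y, hY, hYj, hYcard, hYpref⟩ := exists_serial_allocation v q j T (by simp [T])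
    (E \ B) (by rw [card_sdiff_of_subset hB.1, hB.2, hT]; omega)
  have hagree : ∀ i ≠ i₀, Function.update Y i₀ B i = Y i := fun i hi =>
    Function.update_of_ne hi _ _
  have huniv : insert i₀ (insert j T) = univ := by
    rw [insert_erase (by simp [hij.symm]), insert_erase (mem_univ _)]
  refine ⟨Function.update Y i₀ B, huniv ▸ hY.update (by simp [T, hij]) hB.1, ?_, ?_, ?_, ?_⟩
  · rw [hagree j hij.symm, hYj, card_sdiff_of_subset hB.1, hB.2, hT]
    omega
  · intro i hi
    rcases eq_or_ne i i₀ with rfl | hi₀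
    · simpa using hB.2
    · rw [hagree i hi₀]
      exact hYcard i (hmemT i hi₀ hi)
  · simpa using hBmax
  · intro i hi₀ hi Z hZ
    rw [hagree j hij.symm] at hZ
    rw [hagree i hi₀]
    exact hYpref i (hmemT i hi₀ hi) Z (powersetCard_mono subset_union_right hZ)

theorem isEFX_of_serial_allocation {n q : ℕ} {E : Finset α} {v : Fin n → Finset α → ℝ}
    {X : Fin n → Finset α} {i₀ j : Fin n} (hq : 1 ≤ q) (hmono : ∀ i, SetMonotonic E (v i))
    (hsize : ∀ i ≠ i₀, SizeMonotonic E (q - 1) q (v i)) (hX : IsAllocation E X)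
    (hXj : q ≤ (X j).card) (hXj' : (X j).card ≤ q + 1) (hcard : ∀ i ≠ j, (X i).card = q)
    (hX₀ : ∀ Z ∈ powersetCard q E, v i₀ Z ≤ v i₀ (X i₀))
    (hpref : ∀ i ≠ i₀, i ≠ j → ∀ Z ∈ powersetCard q (X j), v i Z ≤ v i (X i)) :
    IsEFX v X := by
  have hbounds : ∀ i, q ≤ (X i).card ∧ (X i).card ≤ q + 1 := fun i => by
    rcases eq_or_ne i j with rfl | hi
    · exact ⟨hXj, hXj'⟩
    · rw [hcard i hi]; omega
  intro i k y hy
  have hWX : (X k).erase y ⊆ X k := erase_subset y (X k)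
  have hWE : (X k).erase y ⊆ E := hWX.trans (hX.1 k)
  have hWcard : ((X k).erase y).card + 1 = (X k).card := card_erase_add_one hy
  have hk := hbounds k
  rcases eq_or_ne i k with rfl | hik
  · exact hmono i _ _ hWX (hX.1 i)
  rcases eq_or_ne i i₀ with rfl | hi₀
  · exact (hmono i).le_of_card_le hX₀ ((hbounds i).1.trans (card_le_card (hX.1 i))) hWE
      (by omega)
  by_cases hWq : ((X k).erase y).card = q
  · obtain rfl : k = j := by
      by_contra h
      have := hcard k h
      omega
    exact hpref i hi₀ hik _ (mem_powersetCard.2 ⟨hWX, hWq⟩)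
  · exact (hsize i hi₀).le_of_card_lt (hmono i) hWE (hX.1 i) (by omega) (by omega)
      (hbounds i).1

end

/-- Theorem 2(i): With `m > n` goods and `m mod n ≤ 1`, if at least `n-1`
agents have `⟨⌊m/n⌋-1, ⌊m/n⌋⟩`-size monotonic set monotonic valuations, an EFX allocation
exists. -/
theorem efx_exists_n_sub_one_size_monotonic_i {α : Type*} [DecidableEq α] (n m : ℕ)
    (hn : 2 ≤ n) (E : Finset α) (hE : E.card = m) (hmn : n < m)
    (hr : m % n ≤ 1)
    (v : Fin n → Finset α → ℝ)
    (hmono : ∀ i, SetMonotonic E (v i))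
    (S : Finset (Fin n)) (hScard : n - 1 ≤ S.card)
    (hsize : ∀ i ∈ S, SizeMonotonic E (m / n - 1) (m / n) (v i)) :
    ∃ X : Fin n → Finset α, IsAllocation E X ∧ IsEFX v X := by
  have : Nontrivial (Fin n) := Fin.nontrivial_iff_two_le.2 hn
  obtain ⟨i₀, hi₀⟩ :=
    exists_forall_ne_mem_of_card_sub_one_le (S := S) (by simpa using hScard)
  obtain ⟨j, hj⟩ := exists_ne i₀
  have hq : 1 ≤ m / n := (Nat.one_le_div_iff (by omega)).2 hmn.le
  have hdiv := Nat.div_add_mod m n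
  have hsplit : m / n * (n - 1) + m / n = n * (m / n) := by
    rw [← Nat.mul_succ, Nat.succ_eq_add_one, Nat.sub_add_cancel (by omega), mul_comm]
  obtain ⟨X, hX, hXj, hXcard, hX₀, hXpref⟩ :=
    exists_serial_allocation_univ v (m / n) E hj.symm (by simp only [Fintype.card_fin]; omega)
  simp only [Fintype.card_fin] at hXj
  exact ⟨X, hX.isAllocation, isEFX_of_serial_allocation hq hmono
    (fun i hi => hsize i (hi₀ i hi)) hX.isAllocation (by omega) (by omega) hXcard hX₀ hXpref⟩
end

section
/- Let (v_1,…,v_n) be a set monotonic valuation profile with m > n and 1 < m|_n ≤ n−1. If m|_n of the agents have ⟨⌊m/n⌋, ⌊m/n⌋+1⟩-size monotonic valuation functions and a different (disjoint) set of n−1−m|_n agents have ⟨⌊m/n⌋−1, ⌊m/n⌋⟩-size monotonic valuation functions, then an EFX allocation exists at (v_1,…,v_n). -/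
open Finset

/-- Any finset can be partitioned into pieces of prescribed sizes. -/
lemma exists_partition_of_card {α ι : Type*} [DecidableEq α] [DecidableEq ι] (I : Finset ι)
    (c : ι → ℕ) : ∀ S : Finset α, (∑ i ∈ I, c i) = S.card →
    ∃ Y : ι → Finset α, (∀ i ∈ I, Y i ⊆ S ∧ (Y i).card = c i) ∧
      (∀ i ∈ I, ∀ j ∈ I, i ≠ j → Disjoint (Y i) (Y j)) ∧ I.biUnion Y = S := by
  induction I using Finset.induction_on with
  | empty =>
    intro S hS
    refine ⟨fun _ => ∅, by simp, by simp, ?_⟩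
    simp only [Finset.sum_empty] at hS
    simp [Finset.biUnion_empty, (Finset.card_eq_zero.mp hS.symm).symm]
  | @insert a I ha ih =>
    intro S hS
    rw [Finset.sum_insert ha] at hS
    have hca : c a ≤ S.card := by omega
    obtain ⟨T, hTS, hTc⟩ := Finset.exists_subset_card_eq hca
    have hcard : ∑ i ∈ I, c i = (S \ T).card := by
      rw [Finset.card_sdiff_of_subset hTS]; omega
    obtain ⟨Y, hY1, hY2, hY3⟩ := ih (S \ T) hcard
    refine ⟨fun i => if i = a then T else Y i, ?_, ?_, ?_⟩
    · intro i hi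
      dsimp only
      by_cases hia : i = a
      · rw [if_pos hia, hia]; exact ⟨hTS, hTc⟩
      · have hi' : i ∈ I := Finset.mem_of_mem_insert_of_ne hi hia
        rw [if_neg hia]
        exact ⟨(hY1 i hi').1.trans Finset.sdiff_subset, (hY1 i hi').2⟩
    · intro i hi j hj hij
      dsimp only
      by_cases hia : i = a
      · have hja : j ≠ a := fun h => hij (hia.trans h.symm)
        have hj' : j ∈ I := Finset.mem_of_mem_insert_of_ne hj hja
        rw [if_pos hia, if_neg hja]
        exact Finset.disjoint_sdiff.mono_right (hY1 j hj').1
      · have hi' : i ∈ I := Finset.mem_of_mem_insert_of_ne hi hia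
        rw [if_neg hia]
        by_cases hja : j = a
        · rw [if_pos hja]
          exact (Finset.disjoint_sdiff.mono_right (hY1 i hi').1).symm
        · have hj' : j ∈ I := Finset.mem_of_mem_insert_of_ne hj hja
          rw [if_neg hja]
          exact hY2 i hi' j hj' hij
    · rw [Finset.biUnion_insert]
      have hcong : I.biUnion (fun i => if i = a then T else Y i) = I.biUnion Y :=
        Finset.biUnion_congr rfl (fun i hi => if_neg (fun h => ha (by rw [← h]; exact hi)))
      rw [if_pos rfl, hcong, hY3, Finset.union_sdiff_of_subset hTS]

/-- Theorem 2(ii): With `m > n` goods and `1 < m mod n ≤ n-1`, if `m mod n`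
agents have `⟨⌊m/n⌋, ⌊m/n⌋+1⟩`-size monotonic valuations and a disjoint set of
`n - 1 - m mod n` agents have `⟨⌊m/n⌋-1, ⌊m/n⌋⟩`-size monotonic valuations, an EFX
allocation exists. -/
theorem efx_exists_n_sub_one_size_monotonic_ii {α : Type*} [DecidableEq α] (n m : ℕ)
    (hn : 2 ≤ n) (E : Finset α) (hE : E.card = m) (hmn : n < m)
    (hr1 : 1 < m % n) (hr2 : m % n ≤ n - 1)
    (v : Fin n → Finset α → ℝ)
    (hmono : ∀ i, SetMonotonic E (v i))
    (A B : Finset (Fin n)) (hAB : Disjoint A B)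
    (hAcard : A.card = m % n) (hBcard : B.card = n - 1 - m % n)
    (hAsize : ∀ i ∈ A, SizeMonotonic E (m / n) (m / n + 1) (v i))
    (hBsize : ∀ i ∈ B, SizeMonotonic E (m / n - 1) (m / n) (v i)) :
    ∃ X : Fin n → Finset α, IsAllocation E X ∧ IsEFX v X := by
  set q := m / n with hqdef
  set r := m % n with hrdef
  have hn0 : 0 < n := by omega
  have hmod : n * q + r = m := by rw [hqdef, hrdef]; exact Nat.div_add_mod m n
  have hq1 : 1 ≤ q := (Nat.one_le_div_iff hn0).mpr hmn.le
  have h2q : 2 * q ≤ n * q := Nat.mul_le_mul_right q hn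
  have hkey : 2 * q + r ≤ m := by
    calc 2 * q + r ≤ n * q + r := Nat.add_le_add_right h2q r
    _ = m := hmod
  have hqm : q + 1 < m := by omega
  -- the one remaining agent f
  have hABcard : (A ∪ B).card = n - 1 := by
    rw [Finset.card_union_of_disjoint hAB, hAcard, hBcard]; omega
  have hcompl : ((A ∪ B)ᶜ).card = 1 := by
    rw [Finset.card_compl, hABcard, Fintype.card_fin]; omega
  obtain ⟨f, hf⟩ := Finset.card_pos.mp (by rw [hcompl]; norm_num : 0 < ((A ∪ B)ᶜ).card)
  have hfA : f ∉ A := fun h => (Finset.mem_compl.mp hf) (Finset.mem_union_left _ h)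
  have hfB : f ∉ B := fun h => (Finset.mem_compl.mp hf) (Finset.mem_union_right _ h)
  have huniq : ∀ i : Fin n, i ∉ A → i ∉ B → i = f := by
    intro i hiA hiB
    have hi : i ∈ (A ∪ B)ᶜ := by simp [Finset.mem_compl, Finset.mem_union, hiA, hiB]
    exact Finset.card_le_one.mp (le_of_eq hcompl) i hi f hf
  -- f's favorite q-set
  have hpow : (E.powersetCard q).Nonempty :=
    Finset.powersetCard_nonempty.mpr (by rw [hE]; omega)
  obtain ⟨Xf, hXfmem, hXfmax⟩ := Finset.exists_max_image (E.powersetCard q) (v f) hpow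
  obtain ⟨hXfE, hXfcard⟩ := Finset.mem_powersetCard.mp hXfmem
  -- prescribed sizes
  set c : Fin n → ℕ := fun i => if i ∈ A then q + 1 else q with hcdef
  have hcA : ∀ i ∈ A, c i = q + 1 := fun i hi => if_pos hi
  have hcnA : ∀ i, i ∉ A → c i = q := fun i hi => if_neg hi
  have hcsum : ∑ i : Fin n, c i = m := by
    have hrw : ∀ i : Fin n, c i = q + (if i ∈ A then 1 else 0) := by
      intro i; by_cases h : i ∈ A <;> simp [hcdef, h]
    simp_rw [hrw]
    rw [Finset.sum_add_distrib, Finset.sum_const, Finset.card_univ, Fintype.card_fin,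
      smul_eq_mul, Finset.sum_ite_mem, Finset.univ_inter, Finset.sum_const, smul_eq_mul,
      mul_one, hAcard]
    exact hmod
  have hcf : c f = q := hcnA f hfA
  have hEX : (E \ Xf).card = m - q := by rw [Finset.card_sdiff_of_subset hXfE, hE, hXfcard]
  have hsum' : ∑ i ∈ Finset.univ.erase f, c i = (E \ Xf).card := by
    have h := Finset.add_sum_erase Finset.univ c (Finset.mem_univ f)
    rw [hcsum, hcf] at h
    omega
  obtain ⟨Y, hY1, hY2, hY3⟩ := exists_partition_of_card (Finset.univ.erase f) c (E \ Xf) hsum'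
  -- the initial allocation
  set X0 : Fin n → Finset α := fun k => if k = f then Xf else Y k with hX0def
  have hX0f : ∀ k : Fin n, k = f → X0 k = Xf := by
    intro k hk; rw [hX0def]; simp [hk]
  have hX0nf : ∀ k : Fin n, k ≠ f → X0 k = Y k := by
    intro k hk; rw [hX0def]; simp [hk]
  -- the collection of candidate allocations
  set T : Set (Fin n → Finset α) :=
    {X | X f = Xf ∧ (∀ i, X i ⊆ E ∧ (X i).card = c i) ∧
      (∀ i j, i ≠ j → Disjoint (X i) (X j)) ∧ Finset.univ.biUnion X = E} with hTdef
  have hX0T : X0 ∈ T := by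
    refine ⟨hX0f f rfl, ?_, ?_, ?_⟩
    · intro i
      by_cases hif : i = f
      · rw [hX0f i hif, hif]
        exact ⟨hXfE, by rw [hXfcard, hcf]⟩
      · have hi : i ∈ Finset.univ.erase f := Finset.mem_erase.mpr ⟨hif, Finset.mem_univ i⟩
        rw [hX0nf i hif]
        exact ⟨(hY1 i hi).1.trans Finset.sdiff_subset, (hY1 i hi).2⟩
    · intro i j hij
      by_cases hif : i = f
      · have hjf : j ≠ f := fun h => hij (hif.trans h.symm)
        have hj : j ∈ Finset.univ.erase f := Finset.mem_erase.mpr ⟨hjf, Finset.mem_univ j⟩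
        rw [hX0f i hif, hX0nf j hjf]
        exact Finset.disjoint_sdiff.mono_right (hY1 j hj).1
      · have hi : i ∈ Finset.univ.erase f := Finset.mem_erase.mpr ⟨hif, Finset.mem_univ i⟩
        rw [hX0nf i hif]
        by_cases hjf : j = f
        · rw [hX0f j hjf]
          exact (Finset.disjoint_sdiff.mono_right (hY1 i hi).1).symm
        · have hj : j ∈ Finset.univ.erase f := Finset.mem_erase.mpr ⟨hjf, Finset.mem_univ j⟩
          rw [hX0nf j hjf]
          exact hY2 i hi j hj hij
    · have huniv : (Finset.univ : Finset (Fin n)) = insert f (Finset.univ.erase f) :=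
        (Finset.insert_erase (Finset.mem_univ f)).symm
      rw [huniv, Finset.biUnion_insert, hX0f f rfl,
        Finset.biUnion_congr rfl (fun k hk => hX0nf k (Finset.mem_erase.mp hk).1),
        hY3, Finset.union_sdiff_of_subset hXfE]
  have hTfin : T.Finite := by
    apply (Set.Finite.pi (fun _ : Fin n => (E.powerset).finite_toSet)).subset
    intro X hX
    rw [Set.mem_pi]
    intro i _
    exact Finset.mem_coe.mpr (Finset.mem_powerset.mpr (hX.2.1 i).1)
  obtain ⟨X, hXT, hXmax⟩ :=
    Set.exists_max_image T (fun X => ∑ k ∈ B, v k (X k)) hTfin ⟨X0, hX0T⟩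
  obtain ⟨hXf, hXsc, hXdisj, hXun⟩ := hXT
  refine ⟨X, ⟨fun i => (hXsc i).1, hXdisj, hXun⟩, ?_⟩
  intro i j y hy
  have hZE : (X j).erase y ⊆ E := (Finset.erase_subset _ _).trans (hXsc j).1
  have hZc : ((X j).erase y).card = c j - 1 := by
    rw [Finset.card_erase_of_mem hy, (hXsc j).2]
  by_cases hjA : j ∈ A
  · -- X j has q+1 elements
    have hcj : c j = q + 1 := hcA j hjA
    have hZq : ((X j).erase y).card = q := by omega
    by_cases hiA : i ∈ A
    · have hXi : (X i).card = q + 1 := by rw [(hXsc i).2, hcA i hiA]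
      have hne : (X j).erase y ≠ X i := by
        intro h; rw [h, hXi] at hZq; omega
      exact hAsize i hiA _ _ hZE (hXsc i).1 hne (le_of_eq hZq.symm) (by omega) (le_of_eq hXi)
    by_cases hiB : i ∈ B
    · -- the exchange argument
      have hiA' : i ∉ A := hiA
      have hXi : (X i).card = q := by rw [(hXsc i).2, hcnA i hiA']
      have hij : i ≠ j := fun h => hiA' (h ▸ hjA)
      have hfi : f ≠ i := fun h => hfB (h ▸ hiB)
      have hfj : f ≠ j := fun h => hfA (h ▸ hjA)
      have hjB : j ∉ B := fun h => (Finset.disjoint_left.mp hAB hjA) h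
      have hyXi : y ∉ X i := fun h => (Finset.disjoint_left.mp (hXdisj i j hij) h) hy
      by_contra hcon
      push_neg at hcon
      set X' : Fin n → Finset α :=
        fun k => if k = i then (X j).erase y else if k = j then insert y (X i) else X k
        with hX'def
      have hX'i : X' i = (X j).erase y := by rw [hX'def]; simp
      have hX'j : X' j = insert y (X i) := by rw [hX'def]; simp [hij.symm]
      have hX'k : ∀ k, k ≠ i → k ≠ j → X' k = X k := by
        intro k h1 h2; rw [hX'def]; simp [h1, h2]
      have hZXi : Disjoint ((X j).erase y) (X i) :=
        (hXdisj j i hij.symm).mono_left (Finset.erase_subset _ _)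
      have hZy : y ∉ (X j).erase y := Finset.notMem_erase _ _
      have key : ∀ k, k ≠ i → k ≠ j →
          Disjoint ((X j).erase y) (X k) ∧ Disjoint (insert y (X i)) (X k) := by
        intro k h1 h2
        refine ⟨(hXdisj j k (Ne.symm h2)).mono_left (Finset.erase_subset _ _), ?_⟩
        rw [Finset.insert_eq, Finset.disjoint_union_left]
        refine ⟨?_, hXdisj i k (Ne.symm h1)⟩
        rw [Finset.disjoint_left]
        intro a hay hak
        rw [Finset.mem_singleton] at hay
        rw [hay] at hak
        exact (Finset.disjoint_left.mp (hXdisj j k (Ne.symm h2)) hy) hak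
      have hZI : Disjoint ((X j).erase y) (insert y (X i)) := by
        rw [Finset.disjoint_insert_right]
        exact ⟨hZy, hZXi⟩
      have hX'T : X' ∈ T := by
        refine ⟨?_, ?_, ?_, ?_⟩
        · rw [hX'k f hfi hfj]; exact hXf
        · intro k
          by_cases hki : k = i
          · rw [hki, hX'i]
            exact ⟨hZE, by rw [hZq, hcnA i hiA']⟩
          by_cases hkj : k = j
          · rw [hkj, hX'j]
            refine ⟨Finset.insert_subset ((hXsc j).1 hy) (hXsc i).1, ?_⟩
            rw [Finset.card_insert_of_notMem hyXi, hXi, hcj]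
          · rw [hX'k k hki hkj]; exact hXsc k
        · intro k l hkl
          by_cases hki : k = i
          · rw [hki, hX'i]
            have hli : l ≠ i := fun h => hkl (hki.trans h.symm)
            by_cases hlj : l = j
            · rw [hlj, hX'j]; exact hZI
            · rw [hX'k l hli hlj]; exact (key l hli hlj).1
          by_cases hkj : k = j
          · rw [hkj, hX'j]
            have hlj : l ≠ j := fun h => hkl (hkj.trans h.symm)
            by_cases hli : l = i
            · rw [hli, hX'i]; exact hZI.symm
            · rw [hX'k l hli hlj]; exact (key l hli hlj).2
          · rw [hX'k k hki hkj]
            by_cases hli : l = i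
            · rw [hli, hX'i]; exact ((key k hki hkj).1).symm
            by_cases hlj : l = j
            · rw [hlj, hX'j]; exact ((key k hki hkj).2).symm
            · rw [hX'k l hli hlj]; exact hXdisj k l hkl
        · rw [← hXun]
          ext a
          simp only [Finset.mem_biUnion, Finset.mem_univ, true_and]
          constructor
          · rintro ⟨k, hk⟩
            by_cases hki : k = i
            · rw [hki, hX'i] at hk; exact ⟨j, Finset.erase_subset _ _ hk⟩
            by_cases hkj : k = j
            · rw [hkj, hX'j] at hk
              rcases Finset.mem_insert.mp hk with hay | hk'
              · exact ⟨j, by rw [hay]; exact hy⟩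
              · exact ⟨i, hk'⟩
            · rw [hX'k k hki hkj] at hk; exact ⟨k, hk⟩
          · rintro ⟨k, hk⟩
            by_cases hki : k = i
            · rw [hki] at hk
              exact ⟨j, by rw [hX'j]; exact Finset.mem_insert_of_mem hk⟩
            by_cases hkj : k = j
            · rw [hkj] at hk
              by_cases hay : a = y
              · exact ⟨j, by rw [hX'j, hay]; exact Finset.mem_insert_self _ _⟩
              · exact ⟨i, by rw [hX'i]; exact Finset.mem_erase.mpr ⟨hay, hk⟩⟩
            · exact ⟨k, by rw [hX'k k hki hkj]; exact hk⟩
      have hle : ∑ k ∈ B, v k (X' k) ≤ ∑ k ∈ B, v k (X k) := hXmax X' hX'T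
      have e1 : ∑ k ∈ B, v k (X' k) =
          v i ((X j).erase y) + ∑ k ∈ B.erase i, v k (X k) := by
        rw [← Finset.add_sum_erase B (fun k => v k (X' k)) hiB]
        congr 1
        · exact congrArg (v i) hX'i
        · refine Finset.sum_congr rfl (fun k hk => ?_)
          rw [hX'k k (Finset.ne_of_mem_erase hk)
            (fun h => hjB (h ▸ Finset.mem_of_mem_erase hk))]
      have e2 : ∑ k ∈ B, v k (X k) = v i (X i) + ∑ k ∈ B.erase i, v k (X k) :=
        (Finset.add_sum_erase B (fun k => v k (X k)) hiB).symm
      rw [e1, e2] at hle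
      linarith
    · -- i = f
      have hif : i = f := huniq i hiA hiB
      rw [hif, hXf]
      exact hXfmax _ (Finset.mem_powersetCard.mpr ⟨hZE, hZq⟩)
  · -- X j has q elements
    have hcj : c j = q := hcnA j hjA
    have hZq : ((X j).erase y).card = q - 1 := by omega
    obtain ⟨Z', hZZ', hZ'E, hZ'c⟩ :=
      Finset.exists_subsuperset_card_eq hZE (n := q) (by omega) (by rw [hE]; omega)
    have hvZZ' : v i ((X j).erase y) ≤ v i Z' := hmono i _ _ hZZ' hZ'E
    by_cases hiA : i ∈ A
    · have hXi : (X i).card = q + 1 := by rw [(hXsc i).2, hcA i hiA]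
      have hne : Z' ≠ X i := by intro h; rw [h, hXi] at hZ'c; omega
      exact le_trans hvZZ'
        (hAsize i hiA _ _ hZ'E (hXsc i).1 hne (le_of_eq hZ'c.symm) (by omega) (le_of_eq hXi))
    by_cases hiB : i ∈ B
    · have hXi : (X i).card = q := by rw [(hXsc i).2, hcnA i hiA]
      have hne : (X j).erase y ≠ X i := by intro h; rw [h, hXi] at hZq; omega
      exact hBsize i hiB _ _ hZE (hXsc i).1 hne (le_of_eq hZq.symm) (by omega) (le_of_eq hXi)
    · have hif : i = f := huniq i hiA hiB
      rw [hif] at hvZZ' ⊢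
      rw [hXf]
      exact le_trans hvZZ' (hXfmax _ (Finset.mem_powersetCard.mpr ⟨hZ'E, hZ'c⟩))
end

section
/- Let (v_1,…,v_n) be an arbitrary valuation profile with m > n and 1 < m|_n ≤ n−2. Suppose that: m|_n of the agents have valuation functions that are both ⟨⌊m/n⌋, ⌊m/n⌋+1⟩-size monotonic and ⟨⌊m/n⌋−1, ⌊m/n⌋⟩-set monotonic; a different (disjoint) set of n−1−m|_n agents have ⟨⌊m/n⌋−1, ⌊m/n⌋⟩-size monotonic valuation functions; and the remaining agent has a ⟨⌊m/n⌋−1, ⌊m/n⌋⟩-set monotonic valuation function. Then an EFX allocation exists at (v_1,…,v_n). -/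
open Finset

/-!
Put `q = ⌊m/n⌋`. The agents choose bundles one after another, each taking a most valuable bundle
of its prescribed size among the goods still available: first the agent outside `A ∪ B` takes `q`
goods, then the agents of `B` take `q` goods each, and finally the agents of `A` take `q + 1` goods
each; these sizes add up to `n q + m mod n = m`. The first chooser prefers its bundle to every
`q`-set, hence, by `⟨q-1,q⟩`-set monotonicity, to every `(q-1)`-set. An agent of `B` chose
before the agents of `A`, so it prefers its bundle to any `q` goods of theirs, and to `q - 1`
goods by size monotonicity. An agent of `A` holds one of the largest bundles, and size
monotonicity (after set monotonicity for bundles of size `q`) does the rest.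
-/

section Valuations

variable {α : Type*} {E X Y W : Finset α} {k l : ℕ} {v : Finset α → ℝ}

theorem SizeMonotonic.le_of_card_lt_s7 (hv : SizeMonotonic E k l v) (hX : X ⊆ E) (hY : Y ⊆ E)
    (hk : k ≤ X.card) (hXY : X.card < Y.card) (hl : Y.card ≤ l) : v X ≤ v Y :=
  hv X Y hX hY (by rintro rfl; exact hXY.false) hk hXY hl

theorem SetMonotonicKL.le_of_forall_card_eq_le (hv : SetMonotonicKL E k l v)
    (hmax : ∀ Z ⊆ E, Z.card = l → v Z ≤ v X) (hlE : l ≤ E.card) (hW : W ⊆ E)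
    (hk : k ≤ W.card) (hl : W.card ≤ l) : v W ≤ v X := by
  obtain ⟨Z, hWZ, hZE, hZc⟩ := exists_subsuperset_card_eq hW hl hlE
  rcases hl.lt_or_eq with hlt | heq
  · exact (hv W Z hWZ hZE hk (hZc ▸ hlt) hZc.le).trans (hmax Z hZE hZc)
  · exact hmax W hW heq

variable [DecidableEq α]

theorem SizeMonotonic.efxPref (hv : SizeMonotonic E k l v) (hX : X ⊆ E) (hY : Y ⊆ E)
    (hXc : X.card = l) (hk : k ≤ Y.card - 1) (hYl : Y.card ≤ l) : EFXpref v X Y := by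
  intro y hy
  have hc := card_erase_of_mem hy
  have hpos : 0 < Y.card := card_pos.mpr ⟨y, hy⟩
  exact hv.le_of_card_lt_s7 ((erase_subset y Y).trans hY) hX (by omega) (by omega) hXc.le

theorem SetMonotonicKL.efxPref_of_forall_card_eq_le (hv : SetMonotonicKL E k l v)
    (hmax : ∀ Z ⊆ E, Z.card = l → v Z ≤ v X) (hlE : l ≤ E.card) (hY : Y ⊆ E)
    (hk : k ≤ Y.card - 1) (hl : Y.card ≤ l + 1) : EFXpref v X Y := by
  intro y hy
  have hc := card_erase_of_mem hy
  exact hv.le_of_forall_card_eq_le hmax hlE ((erase_subset y Y).trans hY) (by omega) (by omega)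

theorem efxPref_of_sizeMonotonic_of_setMonotonicKL (hsize : SizeMonotonic E l (l + 1) v)
    (hset : SetMonotonicKL E (l - 1) l v) (hX : X ⊆ E) (hY : Y ⊆ E) (hXc : X.card = l + 1)
    (hYc : Y.card = l ∨ Y.card = l + 1) : EFXpref v X Y := by
  rcases hYc with hYc | hYc
  · intro y hy
    have hc := card_erase_of_mem hy
    calc v (Y.erase y) ≤ v Y :=
          hset _ _ (erase_subset y Y) hY (by omega) (card_erase_lt_of_mem hy) hYc.le
      _ ≤ v X := hsize.le_of_card_lt_s7 hY hX hYc.ge (by omega) hXc.le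
  · exact hsize.efxPref hX hY hXc (by omega) hYc.le

end Valuations

/-- Agents choose in increasing order of `ρ`, each taking a most valuable `s i`-subset of the goods
left. Ties in `ρ` are broken arbitrarily, which is why the optimality clause only covers sets
avoiding the bundles of all other agents `j` with `ρ j ≤ ρ i`. -/
theorem exists_picking_sequence {ι α β : Type*} [DecidableEq ι] [DecidableEq α]
    [LinearOrder β]
    (v : ι → Finset α → ℝ) (s : ι → ℕ) (ρ : ι → β) (S : Finset ι) (P : Finset α)
    (hP : ∑ i ∈ S, s i = P.card) :
    ∃ X : ι → Finset α, (S : Set ι).PairwiseDisjoint X ∧ S.biUnion X = P ∧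
      (∀ i ∈ S, (X i).card = s i) ∧
      ∀ i ∈ S, ∀ Z ⊆ P, (∀ j ∈ S, j ≠ i → ρ j ≤ ρ i → Disjoint Z (X j)) →
        Z.card = s i → v i Z ≤ v i (X i) := by
  induction S using Finset.induction_on_min_value ρ generalizing P with
  | empty =>
    rw [sum_empty, eq_comm, card_eq_zero] at hP
    exact ⟨fun _ => ∅, by simp, by simp [hP], by simp, by simp⟩
  | insert a S ha hmin ih =>
    rw [sum_insert ha] at hP
    obtain ⟨Xa, hXa, hbest⟩ := exists_max_image (P.powersetCard (s a)) (v a)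
      (powersetCard_nonempty.mpr (by omega))
    rw [mem_powersetCard] at hXa
    obtain ⟨X, hdisj, hunion, hcard, hopt⟩ :=
      ih (P \ Xa) (by rw [card_sdiff_of_subset hXa.1]; omega)
    have hXP : ∀ j ∈ S, X j ⊆ P \ Xa := fun j hj => hunion ▸ subset_biUnion_of_mem X hj
    have hupd : ∀ j ∈ S, Function.update X a Xa j = X j := fun j hj =>
      Function.update_of_ne (ne_of_mem_of_not_mem hj ha) _ _
    refine ⟨Function.update X a Xa, ?_, ?_, ?_, ?_⟩
    · rw [coe_insert, Set.pairwiseDisjoint_insert]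
      refine ⟨fun i hi j hj hij => ?_, fun j hj _ => ?_⟩
      · simpa only [Function.onFun, hupd i hi, hupd j hj] using hdisj hi hj hij
      · rw [Function.update_self, hupd j hj]
        exact disjoint_sdiff.mono_right (hXP j hj)
    · rw [biUnion_insert, Function.update_self, biUnion_congr rfl hupd, hunion,
        union_sdiff_of_subset hXa.1]
    · simp only [forall_mem_insert, Function.update_self, hXa.2, true_and]
      exact fun j hj => hupd j hj ▸ hcard j hj
    · simp only [forall_mem_insert, Function.update_self]
      refine ⟨fun Z hZ _ hZc => hbest Z (mem_powersetCard.mpr ⟨hZ, hZc⟩),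
        fun i hi Z hZ hZdisj hZc => ?_⟩
      have hia : i ≠ a := ne_of_mem_of_not_mem hi ha
      have hZXa : Disjoint Z Xa := hZdisj.1 hia.symm (hmin i hi)
      rw [hupd i hi]
      refine hopt i hi Z (subset_sdiff.mpr ⟨hZ, hZXa⟩) (fun j hj hji hρ => ?_) hZc
      simpa only [hupd j hj] using hZdisj.2 j hj hji hρ

theorem exists_allocation_three_rounds {α : Type*} [DecidableEq α] {n : ℕ} (E : Finset α)
    (v : Fin n → Finset α → ℝ) (A B : Finset (Fin n)) (q : ℕ) (hAB : Disjoint A B)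
    (hn : n ≤ A.card + B.card + 1) (hE : n * q + A.card = E.card) :
    ∃ X : Fin n → Finset α, IsAllocation E X ∧
      (∀ i ∈ A, (X i).card = q + 1) ∧ (∀ i ∉ A, (X i).card = q) ∧
      (∀ i ∉ A ∪ B, ∀ Z ⊆ E, Z.card = q → v i Z ≤ v i (X i)) ∧
      (∀ i ∈ B, ∀ j ∈ A, ∀ Z ⊆ X j, Z.card = q → v i Z ≤ v i (X i)) := by
  have hrest_unique : ∀ i j, i ∉ A ∪ B → j ∉ A ∪ B → i = j := by
    have : (A ∪ B)ᶜ.card ≤ 1 := by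
      rw [card_compl, card_union_of_disjoint hAB, Fintype.card_fin]
      omega
    exact fun i j hi hj => card_le_one.mp this i (mem_compl.mpr hi) j (mem_compl.mpr hj)
  obtain ⟨X, hdisj, hunion, hcard, hopt⟩ := exists_picking_sequence v
    (fun i => q + if i ∈ A then 1 else 0)
    (fun i => if i ∈ A then 2 else if i ∈ B then 1 else 0) univ E
    (by simpa [sum_add_distrib] using hE)
  have hXE : ∀ i, X i ⊆ E := fun i => hunion ▸ subset_biUnion_of_mem X (mem_univ i)
  refine ⟨X, ⟨hXE, fun i j hij => hdisj (mem_univ i) (mem_univ j) hij, hunion⟩,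
    fun i hi => by simpa [hi] using hcard i (mem_univ i),
    fun i hi => by simpa [hi] using hcard i (mem_univ i), fun i hi Z hZ hZc => ?_,
    fun i hiB j hjA Z hZ hZc => ?_⟩
  · have hiA : i ∉ A := fun h => hi (mem_union_left B h)
    have hiB : i ∉ B := fun h => hi (mem_union_right A h)
    refine hopt i (mem_univ i) Z hZ (fun k _ hki hρ => absurd (hrest_unique k i ?_ hi) hki)
      (by simp [hZc, hiA])
    simp only [hiA, hiB, if_false, nonpos_iff_eq_zero] at hρ
    split_ifs at hρ with hkA hkB
    simp [hkA, hkB]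
  · have hiA : i ∉ A := disjoint_right.mp hAB hiB
    refine hopt i (mem_univ i) Z (hZ.trans (hXE j)) (fun k _ hki hρ => ?_) (by simp [hZc, hiA])
    have hkA : k ∉ A := by intro hkA; simp [hkA, hiA, hiB] at hρ
    exact (hdisj (mem_univ j) (mem_univ k) (ne_of_mem_of_not_mem hjA hkA)).mono_left hZ

theorem efx_exists_relaxed_ii_general {α : Type*} [DecidableEq α] (n m : ℕ)
    (E : Finset α) (hE : E.card = m)
    (v : Fin n → Finset α → ℝ)
    (A B : Finset (Fin n)) (hAB : Disjoint A B)
    (hAcard : A.card = m % n) (hBcard : B.card = n - 1 - m % n)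
    (hA : ∀ i ∈ A, SizeMonotonic E (m / n) (m / n + 1) (v i) ∧
      SetMonotonicKL E (m / n - 1) (m / n) (v i))
    (hB : ∀ i ∈ B, SizeMonotonic E (m / n - 1) (m / n) (v i))
    (hrest : ∀ i : Fin n, i ∉ A ∪ B → SetMonotonicKL E (m / n - 1) (m / n) (v i)) :
    ∃ X : Fin n → Finset α, IsAllocation E X ∧ IsEFX v X := by
  obtain ⟨X, hX, hcardA, hcardnA, hfirst, hBopt⟩ :=
    exists_allocation_three_rounds E v A B (m / n) hAB (by rw [hAcard, hBcard]; omega)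
      (by rw [hAcard, hE, Nat.div_add_mod])
  have hXE : ∀ i, X i ⊆ E := hX.1
  have hcard : ∀ j, (X j).card = m / n ∨ (X j).card = m / n + 1 := fun j => by
    by_cases hj : j ∈ A
    exacts [Or.inr (hcardA j hj), Or.inl (hcardnA j hj)]
  refine ⟨X, hX, fun i j => ?_⟩
  by_cases hiA : i ∈ A
  · exact efxPref_of_sizeMonotonic_of_setMonotonicKL (hA i hiA).1 (hA i hiA).2 (hXE i) (hXE j)
      (hcardA i hiA) (hcard j)
  by_cases hiB : i ∈ B
  · by_cases hjA : j ∈ A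
    · exact fun y hy => hBopt i hiB j hjA _ (erase_subset y _)
        (by rw [card_erase_of_mem hy, hcardA j hjA, Nat.add_sub_cancel])
    · exact (hB i hiB).efxPref (hXE i) (hXE j) (hcardnA i hiA) (by rw [hcardnA j hjA])
        (hcardnA j hjA).le
  · have hi : i ∉ A ∪ B := by simp [hiA, hiB]
    exact (hrest i hi).efxPref_of_forall_card_eq_le (hfirst i hi) (hE ▸ Nat.div_le_self m n)
      (hXE j) (by have := hcard j; omega) (by have := hcard j; omega)

/-- Theorem 4(ii): arbitrary valuation profile, `m > n`, `1 < m mod n ≤ n-2`.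
If `m mod n` agents have valuations that are both `⟨⌊m/n⌋, ⌊m/n⌋+1⟩`-size monotonic and
`⟨⌊m/n⌋-1, ⌊m/n⌋⟩`-set monotonic, a disjoint set of `n - 1 - m mod n` agents have
`⟨⌊m/n⌋-1, ⌊m/n⌋⟩`-size monotonic valuations, and the remaining agent has a
`⟨⌊m/n⌋-1, ⌊m/n⌋⟩`-set monotonic valuation, then an EFX allocation exists. -/
theorem efx_exists_relaxed_ii {α : Type*} [DecidableEq α] (n m : ℕ)
    (hn : 2 ≤ n) (E : Finset α) (hE : E.card = m) (hmn : n < m)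
    (hr1 : 1 < m % n) (hr2 : m % n ≤ n - 2)
    (v : Fin n → Finset α → ℝ)
    (A B : Finset (Fin n)) (hAB : Disjoint A B)
    (hAcard : A.card = m % n) (hBcard : B.card = n - 1 - m % n)
    (hA : ∀ i ∈ A, SizeMonotonic E (m / n) (m / n + 1) (v i) ∧
      SetMonotonicKL E (m / n - 1) (m / n) (v i))
    (hB : ∀ i ∈ B, SizeMonotonic E (m / n - 1) (m / n) (v i))
    (hrest : ∀ i : Fin n, i ∉ A ∪ B → SetMonotonicKL E (m / n - 1) (m / n) (v i)) :
    ∃ X : Fin n → Finset α, IsAllocation E X ∧ IsEFX v X :=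
  efx_exists_relaxed_ii_general n m E hE v A B hAB hAcard hBcard hA hB hrest
end

section
/- Let E be a set of 4 indivisible goods. For each ℓ ∈ {1, 2}, there exists a set monotonic valuation function v on 2^E that is ⟨ℓ, ℓ+1⟩-size monotonic but not MMS-feasible. (Concretely, writing E = {a,b,c,d}, any such v with v({a,b}) > v({c,d}) > v({b,c}) > v({a,d}) fails MMS-feasibility, witnessed by the two partitions {{a,b},{c,d}} and {{b,c},{a,d}} of E.) -/
open Finset

/-- A set monotonic valuation is MMS-feasible if for every `X ⊆ E` and any two partitions
of `X` into two (possibly empty) parts, the max of the values of the first partition's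
parts is at least the min of the values of the second partition's parts. -/
def MMSFeasible {α : Type*} [DecidableEq α] (E : Finset α) (v : Finset α → ℝ) : Prop :=
  ∀ X ⊆ E, ∀ X₁ X₂ X₁' X₂' : Finset α,
    Disjoint X₁ X₂ → X₁ ∪ X₂ = X → Disjoint X₁' X₂' → X₁' ∪ X₂' = X →
    min (v X₁') (v X₂') ≤ max (v X₁) (v X₂)

lemma aux_card3 {α : Type*} [DecidableEq α] (x y z : α) : ({x,y,z} : Finset α).card ≤ 3 := by
  have h1 := Finset.card_insert_le x ({y,z} : Finset α)
  have h2 := Finset.card_insert_le y ({z} : Finset α)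
  simp at h1 h2 ⊢
  omega

lemma aux_distinct {α : Type*} [DecidableEq α] {a b c d : α}
    (h4 : ({a,b,c,d} : Finset α).card = 4) :
    a ≠ b ∧ a ≠ c ∧ a ≠ d ∧ b ≠ c ∧ b ≠ d ∧ c ≠ d := by
  refine ⟨?_, ?_, ?_, ?_, ?_, ?_⟩ <;> intro h <;> subst h <;>
    [ (have hs : ({a,a,c,d} : Finset α) ⊆ {a,c,d} := by intro x hx; simp at hx ⊢; tauto);
      (have hs : ({a,b,a,d} : Finset α) ⊆ {a,b,d} := by intro x hx; simp at hx ⊢; tauto);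
      (have hs : ({a,b,c,a} : Finset α) ⊆ {a,b,c} := by intro x hx; simp at hx ⊢; tauto);
      (have hs : ({a,b,b,d} : Finset α) ⊆ {a,b,d} := by intro x hx; simp at hx ⊢; tauto);
      (have hs : ({a,b,c,b} : Finset α) ⊆ {a,b,c} := by intro x hx; simp at hx ⊢; tauto);
      (have hs : ({a,b,c,c} : Finset α) ⊆ {a,b,c} := by intro x hx; simp at hx ⊢; tauto)] <;>
    · have h1 := (Finset.card_le_card hs).trans (aux_card3 _ _ _)
      omega

lemma aux_key2 {α : Type*} [DecidableEq α] {E : Finset α} {a b c d : α}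
    (hab : a ≠ b) (hac : a ≠ c) (had : a ≠ d) (hbc : b ≠ c) (hbd : b ≠ d) (hcd : c ≠ d)
    (hEq : E = {a,b,c,d}) (v : Finset α → ℝ)
    (h1 : v ({c,d} : Finset α) < v ({a,b} : Finset α))
    (h2 : v ({b,c} : Finset α) < v ({c,d} : Finset α))
    (h3 : v ({a,d} : Finset α) < v ({b,c} : Finset α)) :
    ¬ MMSFeasible E v := by
  intro hM
  have dis1 : Disjoint ({b,c} : Finset α) ({a,d} : Finset α) := by
    simp [Finset.disjoint_insert_left, hab, hac, had, hbc, hbd, hcd,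
      hab.symm, hac.symm, had.symm, hbc.symm, hbd.symm, hcd.symm]
  have dis2 : Disjoint ({a,b} : Finset α) ({c,d} : Finset α) := by
    simp [Finset.disjoint_insert_left, hab, hac, had, hbc, hbd, hcd,
      hab.symm, hac.symm, had.symm, hbc.symm, hbd.symm, hcd.symm]
  have un1 : ({b,c} : Finset α) ∪ ({a,d} : Finset α) = E := by
    rw [hEq]; ext x; simp; try tauto
  have un2 : ({a,b} : Finset α) ∪ ({c,d} : Finset α) = E := by
    rw [hEq]; ext x; simp; try tauto
  have := hM E (subset_refl E) {b,c} {a,d} {a,b} {c,d} dis1 un1 dis2 un2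
  rw [min_eq_right h1.le, max_eq_left h3.le] at this
  linarith

/-- on a set of 4 goods, for each `ℓ ∈ {1,2}` there is a set monotonic,
`⟨ℓ, ℓ+1⟩`-size monotonic valuation that is not MMS-feasible; concretely, writing
`E = {a,b,c,d}`, any set monotonic `v` with `v {a,b} > v {c,d} > v {b,c} > v {a,d}` fails
MMS-feasibility. -/
theorem size_monotonic_not_MMS_feasible {α : Type*} [DecidableEq α]
    (E : Finset α) (hE : E.card = 4) :
    (∀ ℓ ∈ ({1, 2} : Finset ℕ), ∃ v : Finset α → ℝ,
      SetMonotonic E v ∧ SizeMonotonic E ℓ (ℓ + 1) v ∧ ¬ MMSFeasible E v) ∧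
    (∀ a b c d : α, E = {a, b, c, d} →
      ∀ v : Finset α → ℝ, SetMonotonic E v →
        v ({c, d} : Finset α) < v ({a, b} : Finset α) →
        v ({b, c} : Finset α) < v ({c, d} : Finset α) →
        v ({a, d} : Finset α) < v ({b, c} : Finset α) →
        ¬ MMSFeasible E v) := by
  constructor
  · obtain ⟨a, t, hat, hins, ht3⟩ := Finset.card_eq_succ.mp (by rw [hE] : E.card = 3 + 1)
    obtain ⟨b, c, d, hbc, hbd, hcd, rfl⟩ := Finset.card_eq_three.mp ht3
    simp at hat
    obtain ⟨hab, hac, had⟩ := hat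
    have hEq : E = {a,b,c,d} := hins.symm
    intro ℓ hℓ
    set p : Finset α → ℝ := fun X =>
      if X = ({a,b} : Finset α) then 3 else if X = {c,d} then 2 else if X = {b,c} then 1 else 0
      with hp
    have hmono : ∀ X Y : Finset α, X.card < Y.card →
        (10:ℝ) ^ X.card + p X ≤ 10 ^ Y.card + p Y := by
      intro X Y hXY
      have hp0 : ∀ Z : Finset α, (0:ℝ) ≤ p Z ∧ p Z ≤ 3 := by
        intro Z; simp only [hp]; split_ifs <;> norm_num
      have h1 : (1:ℝ) ≤ 10 ^ X.card := one_le_pow₀ (by norm_num)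
      have h2 : (10:ℝ) ^ (X.card + 1) ≤ 10 ^ Y.card := pow_le_pow_right₀ (by norm_num) hXY
      have h3 : (10:ℝ) ^ (X.card + 1) = 10 * 10 ^ X.card := by ring
      have := (hp0 X).2
      have := (hp0 Y).1
      nlinarith
    refine ⟨fun X => 10 ^ X.card + p X, ?_, ?_, ?_⟩
    · intro X Y hXY _
      rcases eq_or_ne X Y with rfl | hne
      · exact le_refl _
      · exact hmono X Y (Finset.card_lt_card (lt_of_le_of_ne hXY hne))
    · intro X Y _ _ _ _ hcard _
      exact hmono X Y hcard
    · have n1 : ({c,d} : Finset α) ≠ {a,b} := by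
        intro h
        have hc : c ∈ ({a,b} : Finset α) := by rw [← h]; simp
        simp at hc; rcases hc with h | h <;> simp_all
      have n2 : ({b,c} : Finset α) ≠ {a,b} := by
        intro h
        have hc : c ∈ ({a,b} : Finset α) := by rw [← h]; simp
        simp at hc; rcases hc with h | h <;> simp_all
      have n3 : ({b,c} : Finset α) ≠ {c,d} := by
        intro h
        have hc : b ∈ ({c,d} : Finset α) := by rw [← h]; simp
        simp at hc; rcases hc with h | h <;> simp_all
      have n4 : ({a,d} : Finset α) ≠ {a,b} := by
        intro h
        have hc : d ∈ ({a,b} : Finset α) := by rw [← h]; simp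
        simp at hc; rcases hc with h | h <;> simp_all
      have n5 : ({a,d} : Finset α) ≠ {c,d} := by
        intro h
        have hc : a ∈ ({c,d} : Finset α) := by rw [← h]; simp
        simp at hc; rcases hc with h | h <;> simp_all
      have n6 : ({a,d} : Finset α) ≠ {b,c} := by
        intro h
        have hc : a ∈ ({b,c} : Finset α) := by rw [← h]; simp
        simp at hc; rcases hc with h | h <;> simp_all
      have c1 : ({a,b} : Finset α).card = 2 := Finset.card_pair hab
      have c2 : ({c,d} : Finset α).card = 2 := Finset.card_pair hcd
      have c3 : ({b,c} : Finset α).card = 2 := Finset.card_pair hbc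
      have c4 : ({a,d} : Finset α).card = 2 := Finset.card_pair had
      refine aux_key2 hab hac had hbc hbd hcd hEq _ ?_ ?_ ?_ <;>
        simp only [hp, c1, c2, c3, c4, if_pos rfl, if_neg n1, if_neg n2, if_neg n3,
          if_neg n4, if_neg n5, if_neg n6] <;> norm_num
  · intro a b c d hEq v _ h1 h2 h3
    have h4 : ({a,b,c,d} : Finset α).card = 4 := by rw [← hEq]; exact hE
    obtain ⟨hab, hac, had, hbc, hbd, hcd⟩ := aux_distinct h4
    exact aux_key2 hab hac had hbc hbd hcd hEq v h1 h2 h3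
end

section
/- Let (v̂_1,…,v̂_n) be a strict set monotonic valuation profile with m > n; set ℓ = ⌊m/n⌋ and r = m|_n, and assume 1 < r ≤ n−1. Suppose v̂_i is ⟨ℓ−1, ℓ⟩-size monotonic for each i with 2 ≤ i ≤ n−r and v̂_i is ⟨ℓ, ℓ+1⟩-size monotonic for each i with n−r < i ≤ n (v̂_1 is an arbitrary strict set monotonic valuation). Define the allocation (X_1,…,X_n) greedily as follows: for 1 ≤ i ≤ n−r, X_i is the unique v̂_i-maximal ℓ-element subset of E \ (X_1 ∪ … ∪ X_{i−1}); for n−r < i ≤ n, X_i is an arbitrary (ℓ+1)-element subset of E \ (X_1 ∪ … ∪ X_{i−1}). Then (X_1,…,X_n) is a well-defined allocation and is EFX at (v̂_1,…,v̂_n). -/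
open Finset

/-- The greedy allocation of the proof of Theorem 2: the first `t` agents (in order)
successively pick their unique best `ℓ`-element bundle among the remaining goods, and each
later agent gets an arbitrary `(ℓ+1)`-element bundle of the remaining goods. -/
def GreedyAlloc {α : Type*} [DecidableEq α] (E : Finset α) {n : ℕ} (t ℓ : ℕ)
    (v : Fin n → Finset α → ℝ) (X : Fin n → Finset α) : Prop :=
  (∀ i : Fin n, (i : ℕ) < t →
    X i ⊆ E \ (Finset.Iio i).biUnion X ∧ (X i).card = ℓ ∧
      ∀ S ⊆ E \ (Finset.Iio i).biUnion X, S.card = ℓ → v i S ≤ v i (X i)) ∧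
  (∀ i : Fin n, t ≤ (i : ℕ) →
    X i ⊆ E \ (Finset.Iio i).biUnion X ∧ (X i).card = ℓ + 1)

lemma filter_lt_eq_Iio' {n : ℕ} (k : ℕ) (hk : k < n) :
    (univ.filter fun j : Fin n => (j:ℕ) < k) = Finset.Iio ⟨k, hk⟩ := by
  ext j; simp [Fin.lt_def]

lemma cardB' {α : Type*} [DecidableEq α] {n : ℕ} (X : Fin n → Finset α) (E : Finset α)
    (t ℓ : ℕ) (k : ℕ) : k ≤ n →
    (∀ j : Fin n, (j:ℕ) < k → X j ⊆ E \ (Finset.Iio j).biUnion X) →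
    (∀ j : Fin n, (j:ℕ) < k → (X j).card = if (j:ℕ) < t then ℓ else ℓ+1) →
    ((univ.filter fun j : Fin n => (j:ℕ) < k).biUnion X).card = k*ℓ + (k - t) := by
  induction k with
  | zero => intro _ _ _; simp
  | succ k ih =>
    intro hk hsub hcard
    have hkn : k < n := hk
    set i : Fin n := ⟨k, hkn⟩ with hi
    have hfil : (univ.filter fun j : Fin n => (j:ℕ) < k+1)
        = insert i (univ.filter fun j : Fin n => (j:ℕ) < k) := by
      ext j; simp [hi, Fin.ext_iff]; omega
    have hIio : (univ.filter fun j : Fin n => (j:ℕ) < k) = Finset.Iio i :=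
      filter_lt_eq_Iio' k hkn
    have hd : Disjoint (X i) ((univ.filter fun j : Fin n => (j:ℕ) < k).biUnion X) := by
      rw [hIio]
      exact Finset.disjoint_of_subset_left (hsub i (Nat.lt_succ_self k)) sdiff_disjoint
    rw [hfil, Finset.biUnion_insert, Finset.card_union_of_disjoint hd,
      ih (le_of_lt hk) (fun j hj => hsub j (by omega)) (fun j hj => hcard j (by omega)),
      hcard i (Nat.lt_succ_self k)]
    have h2 : (k+1)*ℓ = k*ℓ + ℓ := by ring
    rw [h2, show ((i:ℕ)) = k from rfl]
    split_ifs with h <;> omega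

/-- let `ℓ = ⌊m/n⌋`, `r = m mod n` with `1 < r ≤ n-1`. For a strict set
monotonic profile in which agents `2,…,n-r` (indices `1,…,n-r-1` in `Fin n`) are
`⟨ℓ-1, ℓ⟩`-size monotonic and agents `n-r+1,…,n` are `⟨ℓ, ℓ+1⟩`-size monotonic, the greedy
allocation is well defined (some greedy allocation exists), and every greedy allocation is
an allocation and is EFX. -/
theorem greedy_allocation_is_EFX {α : Type*} [DecidableEq α] (n m : ℕ)
    (hn : 2 ≤ n) (E : Finset α) (hE : E.card = m) (hmn : n < m)
    (hr1 : 1 < m % n) (hr2 : m % n ≤ n - 1)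
    (v : Fin n → Finset α → ℝ)
    (hmono : ∀ i, SetMonotonic E (v i)) (hstrict : ∀ i, StrictVal E (v i))
    (hsize1 : ∀ i : Fin n, 0 < (i : ℕ) → (i : ℕ) < n - m % n →
      SizeMonotonic E (m / n - 1) (m / n) (v i))
    (hsize2 : ∀ i : Fin n, n - m % n ≤ (i : ℕ) →
      SizeMonotonic E (m / n) (m / n + 1) (v i)) :
    (∃ X : Fin n → Finset α, GreedyAlloc E (n - m % n) (m / n) v X) ∧
    (∀ X : Fin n → Finset α, GreedyAlloc E (n - m % n) (m / n) v X →
      IsAllocation E X ∧ IsEFX v X) := by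
  set ℓ := m / n with hℓdef
  set r := m % n with hrdef
  set t := n - r with htdef
  have hn0 : 0 < n := by omega
  have hrn : r < n := Nat.mod_lt m hn0
  have hmeq : n * ℓ + r = m := Nat.div_add_mod m n
  have hℓ1 : 1 ≤ ℓ := (Nat.one_le_div_iff hn0).mpr (le_of_lt hmn)
  constructor
  · -- existence
    have claim : ∀ k, k ≤ n → ∃ X : Fin n → Finset α,
        ∀ j : Fin n, (j:ℕ) < k →
          (X j ⊆ E \ (Finset.Iio j).biUnion X ∧
           (X j).card = (if (j:ℕ) < t then ℓ else ℓ+1) ∧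
           ((j:ℕ) < t → ∀ S ⊆ E \ (Finset.Iio j).biUnion X, S.card = ℓ →
              v j S ≤ v j (X j))) := by
      intro k
      induction k with
      | zero => intro _; exact ⟨fun _ => ∅, fun j hj => absurd hj (by omega)⟩
      | succ k ih =>
        intro hk
        obtain ⟨X, hXp⟩ := ih (by omega)
        have hkn : k < n := hk
        set i : Fin n := ⟨k, hkn⟩ with hidef
        have hival : (i:ℕ) = k := rfl
        have hIioi : Finset.Iio i = univ.filter (fun j : Fin n => (j:ℕ) < k) :=
          (filter_lt_eq_Iio' k hkn).symm
        have hBcard : ((Finset.Iio i).biUnion X).card = k*ℓ + (k - t) := by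
          rw [hIioi]
          exact cardB' X E t ℓ k (by omega)
            (fun j hj => (hXp j hj).1) (fun j hj => (hXp j hj).2.1)
        have hBsubE : (Finset.Iio i).biUnion X ⊆ E := by
          refine Finset.biUnion_subset.mpr fun j hj => ?_
          have hji : (j:ℕ) < k := by
            have h := Fin.lt_def.mp (Finset.mem_Iio.mp hj); omega
          exact ((hXp j hji).1).trans Finset.sdiff_subset
        have hRcard : (E \ (Finset.Iio i).biUnion X).card = m - (k*ℓ + (k - t)) := by
          rw [Finset.card_sdiff_of_subset hBsubE, hBcard, hE]
        have henough : (if k < t then ℓ else ℓ+1) ≤ (E \ (Finset.Iio i).biUnion X).card := by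
          rw [hRcard]
          have h1 : (k+1) * ℓ ≤ n * ℓ := Nat.mul_le_mul_right ℓ (by omega)
          have h2 : (k+1)*ℓ = k*ℓ + ℓ := by ring
          split_ifs with h <;> omega
        -- choose the new bundle S together with its maximality property when k < t
        have hpick : ∃ S : Finset α, S ⊆ E \ (Finset.Iio i).biUnion X ∧
            S.card = (if k < t then ℓ else ℓ+1) ∧
            (k < t → ∀ S' ⊆ E \ (Finset.Iio i).biUnion X, S'.card = ℓ → v i S' ≤ v i S) := by
          rcases lt_or_ge k t with hkt | hkt
          · have hER : ℓ ≤ (E \ (Finset.Iio i).biUnion X).card := by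
              simpa [if_pos hkt] using henough
            obtain ⟨S0, hS0R, hS0c⟩ := Finset.exists_subset_card_eq hER
            have hPne : ((E \ (Finset.Iio i).biUnion X).powersetCard ℓ).Nonempty :=
              ⟨S0, Finset.mem_powersetCard.mpr ⟨hS0R, hS0c⟩⟩
            obtain ⟨S, hSP, hSmax⟩ := Finset.exists_max_image _ (v i) hPne
            obtain ⟨hSR, hSc⟩ := Finset.mem_powersetCard.mp hSP
            exact ⟨S, hSR, by rw [if_pos hkt]; exact hSc,
              fun _ S' hS' hc => hSmax S' (Finset.mem_powersetCard.mpr ⟨hS', hc⟩)⟩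
          · have hER : ℓ+1 ≤ (E \ (Finset.Iio i).biUnion X).card := by
              simpa [if_neg (Nat.not_lt.mpr hkt)] using henough
            obtain ⟨S0, hS0R, hS0c⟩ := Finset.exists_subset_card_eq hER
            exact ⟨S0, hS0R, by rw [if_neg (Nat.not_lt.mpr hkt)]; exact hS0c,
              fun h => absurd h (by omega)⟩
        obtain ⟨S, hSR, hSc, hSmax⟩ := hpick
        refine ⟨Function.update X i S, ?_⟩
        have hupd : ∀ x : Fin n, x ≠ i → Function.update X i S x = X x :=
          fun x hx => Function.update_of_ne hx S X
        have hBi : ∀ j : Fin n, (j:ℕ) ≤ k →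
            (Finset.Iio j).biUnion (Function.update X i S) = (Finset.Iio j).biUnion X := by
          intro j hj
          refine Finset.biUnion_congr rfl fun x hx => ?_
          have hxj : (x:ℕ) < (j:ℕ) := Fin.lt_def.mp (Finset.mem_Iio.mp hx)
          exact hupd x (by rw [Fin.ne_iff_vne, hival]; omega)
        intro j hj
        rcases lt_or_ge (j:ℕ) k with hjk | hjk
        · have hji : j ≠ i := by rw [Fin.ne_iff_vne, hival]; omega
          rw [hBi j (by omega), hupd j hji]
          exact hXp j hjk
        · have hji : j = i := Fin.ext (by omega)
          subst hji
          rw [hBi i le_rfl, Function.update_self]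
          refine ⟨hSR, ?_, ?_⟩
          · rw [hival]; exact hSc
          · rw [hival]; exact hSmax
    obtain ⟨X, hX⟩ := claim n le_rfl
    refine ⟨X, fun i hi => ⟨(hX i i.isLt).1, ?_, (hX i i.isLt).2.2 hi⟩,
      fun i hi => ⟨(hX i i.isLt).1, ?_⟩⟩
    · rw [(hX i i.isLt).2.1, if_pos hi]
    · rw [(hX i i.isLt).2.1, if_neg (Nat.not_lt.mpr hi)]
  · -- every greedy allocation is an allocation and EFX
    rintro X ⟨hX1, hX2⟩
    have hsub : ∀ i : Fin n, X i ⊆ E \ (Finset.Iio i).biUnion X := fun i => by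
      rcases lt_or_ge (i:ℕ) t with h | h
      · exact (hX1 i h).1
      · exact (hX2 i h).1
    have hcard : ∀ i : Fin n, (X i).card = if (i:ℕ) < t then ℓ else ℓ+1 := fun i => by
      rcases lt_or_ge (i:ℕ) t with h | h
      · rw [if_pos h]; exact (hX1 i h).2.1
      · rw [if_neg (Nat.not_lt.mpr h)]; exact (hX2 i h).2
    have hsubE : ∀ i, X i ⊆ E := fun i => (hsub i).trans Finset.sdiff_subset
    have hkey : ∀ i j : Fin n, i < j → Disjoint (X i) (X j) := by
      intro i j hij
      have h1 : X i ⊆ (Finset.Iio j).biUnion X :=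
        Finset.subset_biUnion_of_mem X (Finset.mem_Iio.mpr hij)
      exact Finset.disjoint_of_subset_right (hsub j)
        (Finset.disjoint_of_subset_left h1 Finset.disjoint_sdiff)
    have hdisj : ∀ i j : Fin n, i ≠ j → Disjoint (X i) (X j) := by
      intro i j hij
      rcases lt_or_gt_of_ne hij with h | h
      · exact hkey i j h
      · exact (hkey j i h).symm
    have hfiln : (univ.filter fun j : Fin n => (j:ℕ) < n) = univ := by
      ext j; simp [j.isLt]
    have hB := cardB' X E t ℓ n le_rfl (fun j _ => hsub j) (fun j _ => hcard j)
    rw [hfiln] at hB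
    have hUsub : univ.biUnion X ⊆ E :=
      Finset.biUnion_subset.mpr fun j _ => hsubE j
    have hUcard : (univ.biUnion X).card = m := by
      rw [hB, show n - t = r by omega]; exact hmeq
    have hunion : univ.biUnion X = E :=
      Finset.eq_of_subset_of_card_le hUsub (by rw [hUcard, hE])
    refine ⟨⟨hsubE, hdisj, hunion⟩, ?_⟩
    intro i j y hy
    have hYsub : (X j).erase y ⊆ X j := Finset.erase_subset y (X j)
    have hYE : (X j).erase y ⊆ E := hYsub.trans (hsubE j)
    have hYcard : ((X j).erase y).card = (X j).card - 1 := Finset.card_erase_of_mem hy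
    rcases lt_or_ge (i:ℕ) t with hi | hi
    · obtain ⟨hXiub, hXicard, hmax⟩ := hX1 i hi
      rcases lt_trichotomy i j with hij | hij | hij
      · have hXjsub : X j ⊆ E \ (Finset.Iio i).biUnion X :=
          (hsub j).trans (Finset.sdiff_subset_sdiff le_rfl
            (Finset.biUnion_subset_biUnion_of_subset_left X
              (Finset.Iio_subset_Iio (le_of_lt hij))))
        rcases lt_or_ge (j:ℕ) t with hj | hj
        · have h1 : v i ((X j).erase y) ≤ v i (X j) := hmono i _ _ hYsub (hsubE j)
          have h2 : v i (X j) ≤ v i (X i) := hmax (X j) hXjsub (hX1 j hj).2.1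
          linarith
        · have hc : ((X j).erase y).card = ℓ := by
            rw [hYcard, (hX2 j hj).2]; omega
          exact hmax _ (hYsub.trans hXjsub) hc
      · subst hij
        exact hmono i _ _ hYsub (hsubE i)
      · have hji : (j:ℕ) < (i:ℕ) := hij
        have hs := hsize1 i (by omega) hi
        have hXjc : (X j).card = ℓ := (hX1 j (by omega)).2.1
        have hYc : ((X j).erase y).card = ℓ - 1 := by rw [hYcard, hXjc]
        refine hs _ _ hYE (hsubE i) ?_ (by omega) (by omega) (by omega)
        intro h
        have := congrArg Finset.card h
        rw [hYc, hXicard] at this; omega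
    · obtain ⟨hXiub, hXicard⟩ := hX2 i hi
      have hs := hsize2 i hi
      by_cases hij : j = i
      · subst hij
        exact hmono j _ _ hYsub (hsubE j)
      · rcases lt_or_ge (j:ℕ) t with hj | hj
        · have hXjc : (X j).card = ℓ := (hX1 j hj).2.1
          have h1 : v i ((X j).erase y) ≤ v i (X j) := hmono i _ _ hYsub (hsubE j)
          have h2 : v i (X j) ≤ v i (X i) := by
            refine hs _ _ (hsubE j) (hsubE i) ?_ (by omega) (by omega) (by omega)
            intro h
            have := congrArg Finset.card h
            rw [hXjc, hXicard] at this; omega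
          linarith
        · have hXjc : (X j).card = ℓ + 1 := (hX2 j hj).2
          have hYc : ((X j).erase y).card = ℓ := by rw [hYcard, hXjc]; omega
          refine hs _ _ hYE (hsubE i) ?_ (by omega) (by omega) (by omega)
          intro h
          have := congrArg Finset.card h
          rw [hYc, hXicard] at this; omega
end
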